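/- arXiv:2105.07260 — 3 statements merged into one kernel-verified Lean document; each statement's English description precedes it below -/
import Mathlib

section
/- The permute-and-flip distribution with scores q and rate λ is equal, as a probability distribution on Fin k, to the report-noisy-max-with-exponential-noise distribution with the same scores q and rate λ. -/
open MeasureTheory ProbabilityTheory Real

/-- The Bernoulli distribution on `Bool` with success probability `p`
(a probability measure whenever `0 ≤ p ≤ 1`). -/
noncomputable def bernoulliMeasure (p : ℝ) : Measure Bool :=
  ENNReal.ofReal p • Measure.dirac true + ENNReal.ofReal (1 - p) • Measure.dirac false

/-- Every function on the permutation group of `Fin k` is measurable (discrete σ-algebra). -/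
instance (n : ℕ) : MeasurableSpace (Equiv.Perm (Fin n)) := ⊤

/-- The joint law of a uniformly random permutation of `Fin k` together with (independent of it)
independent Bernoulli coins, the `i`-th having success probability `p i`. -/
noncomputable def permCoinsMeasure (k : ℕ) (p : Fin k → ℝ) :
    Measure (Equiv.Perm (Fin k) × (Fin k → Bool)) :=
  ((PMF.uniformOfFintype (Equiv.Perm (Fin k))).toMeasure).prod
    (Measure.pi fun i => bernoulliMeasure (p i))

/-!
Write `p j = exp (λ (q j - q*))`. Both probabilities equal
`p i * ∑_{S ⊆ univ \ {i}} (∏_{j ∈ S} -p j) / (#S + 1)`.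

For permute-and-flip, expand `∏ (1 - p j)` over the indices preceding `i` and use that a fixed set
`S ∌ i` precedes `i` in a uniformly random order with probability `1 / (#S + 1)`: the permutations
in which a given element of `insert i S` comes last are equinumerous, via a transposition.

For report-noisy-max, integrate out `X i`: given `X i = t`, the other indices lose with probability
`∏ (1 - p j * exp (-λ (t - (q* - q i))))`. Memorylessness of `Expo(λ)` moves the shift
`q* - q i` out as the factor `p i`, and expanding the product leaves integrals
`∫ λ exp (-λ (n + 1) s) ds = 1 / (n + 1)`.
-/

open Finset Equiv
open scoped ENNReal

instance (p : ℝ) : IsFiniteMeasure (_root_.bernoulliMeasure p) :=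
  ⟨by simp [_root_.bernoulliMeasure, ENNReal.add_lt_top]⟩

lemma bernoulliMeasure_true (p : ℝ) : _root_.bernoulliMeasure p {true} = ENNReal.ofReal p := by
  simp [_root_.bernoulliMeasure]

lemma bernoulliMeasure_false (p : ℝ) :
    _root_.bernoulliMeasure p {false} = ENNReal.ofReal (1 - p) := by
  simp [_root_.bernoulliMeasure]

lemma bernoulliMeasure_univ {p : ℝ} (h0 : 0 ≤ p) (h1 : p ≤ 1) :
    _root_.bernoulliMeasure p Set.univ = 1 := by
  simp [_root_.bernoulliMeasure, ← ENNReal.ofReal_add h0 (sub_nonneg.2 h1)]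

lemma pi_bernoulliMeasure_firstSuccess {ι : Type*} [Fintype ι] [DecidableEq ι] {p : ι → ℝ}
    (hp0 : ∀ j, 0 ≤ p j) (hp1 : ∀ j, p j ≤ 1) {i : ι} {B : Finset ι} (hi : i ∉ B) :
    Measure.pi (fun j => _root_.bernoulliMeasure (p j))
        {b | b i = true ∧ ∀ j ∈ B, b j = false}
      = ENNReal.ofReal (p i * ∏ j ∈ B, (1 - p j)) := by
  have hbox : {b : ι → Bool | b i = true ∧ ∀ j ∈ B, b j = false}
      = Set.univ.pi
          (Function.update (fun j => if j ∈ B then {false} else Set.univ) i {true}) := by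
    ext b
    simp only [Set.mem_ofPred_eq, Set.mem_univ_pi]
    refine ⟨fun ⟨hbi, hB⟩ j => ?_, fun h => ⟨by simpa using h i, fun j hj => ?_⟩⟩
    · rcases eq_or_ne j i with rfl | hji
      · simpa using hbi
      · rw [Function.update_of_ne hji]
        split_ifs with hj
        exacts [hB j hj, trivial]
    · simpa [Function.update_of_ne (ne_of_mem_of_not_mem hj hi), hj] using h j
  have hB : ∏ j ∈ B, ENNReal.ofReal (1 - p j)
      = ∏ j ∈ univ.erase i, if j ∈ B then ENNReal.ofReal (1 - p j) else 1 := by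
    rw [prod_ite_mem, inter_eq_right.2 fun j hj =>
      mem_erase.2 ⟨ne_of_mem_of_not_mem hj hi, mem_univ j⟩]
  rw [hbox, Measure.pi_pi, ← Finset.mul_prod_erase _ _ (mem_univ i), Function.update_self,
    bernoulliMeasure_true, ENNReal.ofReal_mul (hp0 i),
    ENNReal.ofReal_prod_of_nonneg fun j _ => sub_nonneg.2 (hp1 j), hB]
  refine congrArg _ (prod_congr rfl fun j hj => ?_)
  rw [Function.update_of_ne (ne_of_mem_erase hj)]
  split_ifs
  · exact bernoulliMeasure_false _
  · exact bernoulliMeasure_univ (hp0 j) (hp1 j)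

section PermutationCounting

variable {α : Type*} [LinearOrder α]

lemma le_mul_swap_of_le {τ : Perm α} {T : Finset α} {s t : α} (hs : s ∈ T) (ht : t ∈ T)
    (h : ∀ j ∈ T, τ j ≤ τ t) : ∀ j ∈ T, (τ * swap s t) j ≤ (τ * swap s t) s := by
  intro j hj
  have hswap : swap s t j ∈ T := by
    rw [swap_apply_def]; split_ifs <;> assumption
  simpa using h _ hswap

variable [Fintype α]

lemma card_perm_forall_lt_mul {i : α} {S : Finset α} (hi : i ∉ S) :
    #{τ : Perm α | ∀ j ∈ S, τ j < τ i} * (#S + 1) = Fintype.card (Perm α) := by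
  set T := insert i S
  let A : α → Finset (Perm α) := fun t => {τ | ∀ j ∈ T, τ j ≤ τ t}
  have hA_i : A i = ({τ : Perm α | ∀ j ∈ S, τ j < τ i} : Finset (Perm α)) := by
    refine filter_congr fun τ _ => ?_
    simp only [T, forall_mem_insert, le_refl, true_and]
    refine forall₂_congr fun j hj => ⟨fun h => h.lt_of_ne ?_, le_of_lt⟩
    exact τ.injective.ne (ne_of_mem_of_not_mem hj hi)
  have hA_card : ∀ t ∈ T, #(A t) = #(A i) := fun t ht =>
    card_nbij' (· * swap i t) (· * swap t i)
      (fun τ hτ => mem_filter.2 ⟨mem_univ _,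
        le_mul_swap_of_le (mem_insert_self i S) ht (mem_filter.1 hτ).2⟩)
      (fun τ hτ => mem_filter.2 ⟨mem_univ _,
        le_mul_swap_of_le ht (mem_insert_self i S) (mem_filter.1 hτ).2⟩)
      (fun τ _ => by simp [mul_assoc, swap_comm t i])
      (fun τ _ => by simp [mul_assoc, swap_comm t i])
  have hcover : T.biUnion A = univ := by
    refine eq_univ_of_forall fun τ => mem_biUnion.2 ?_
    obtain ⟨t, ht, hmax⟩ := T.exists_max_image τ (insert_nonempty i S)
    exact ⟨t, ht, by simpa [A] using hmax⟩
  have hdisj : (T : Set α).PairwiseDisjoint A := by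
    intro s hs t ht hst
    refine disjoint_filter.2 fun τ _ hτs hτt => hst (τ.injective ?_)
    exact le_antisymm (hτt s hs) (hτs t ht)
  rw [← hA_i, ← card_insert_of_notMem hi, ← Finset.card_univ, ← hcover, card_biUnion hdisj,
    sum_congr rfl hA_card, sum_const, smul_eq_mul, mul_comm]

lemma sum_perm_prod_one_sub {R : Type*} [Field R] [CharZero R] (p : α → R) (i : α) :
    ∑ τ : Perm α, ∏ j ∈ {j | τ j < τ i}, (1 - p j)
      = Fintype.card (Perm α) *
          ∑ S ∈ (univ.erase i).powerset, (∏ j ∈ S, -p j) / (#S + 1) := by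
  have hexpand : ∀ τ : Perm α, ∏ j ∈ {j | τ j < τ i}, (1 - p j)
      = ∑ S ∈ (univ.erase i).powerset,
          if ∀ j ∈ S, τ j < τ i then ∏ j ∈ S, -p j else 0 := by
    intro τ
    simp_rw [sub_eq_add_neg, prod_one_add, ← sum_filter]
    refine sum_congr (ext fun S => ?_) fun _ _ => rfl
    simp only [mem_powerset, mem_filter, subset_iff, mem_erase, mem_univ, and_true, true_and]
    exact ⟨fun h => ⟨fun j hj => ne_of_apply_ne τ (h hj).ne, h⟩, fun h => h.2⟩
  simp_rw [hexpand]
  rw [sum_comm, mul_sum]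
  refine sum_congr rfl fun S hS => ?_
  have hiS : i ∉ S := fun h => (mem_erase.1 (mem_powerset.1 hS h)).1 rfl
  have hcount : (#{τ : Perm α | ∀ j ∈ S, τ j < τ i} : R) * (#S + 1)
      = Fintype.card (Perm α) := by
    exact_mod_cast card_perm_forall_lt_mul hiS
  rw [← sum_filter, sum_const, nsmul_eq_mul, ← hcount]
  field_simp

end PermutationCounting

theorem permCoinsMeasure_firstSuccess {k : ℕ} {p : Fin k → ℝ} (hp0 : ∀ j, 0 ≤ p j)
    (hp1 : ∀ j, p j ≤ 1) (i : Fin k) :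
    permCoinsMeasure k p
        {w | w.2 i = true ∧ ∀ j : Fin k, w.1.symm j < w.1.symm i → w.2 j = false}
      = ENNReal.ofReal
          (p i * ∑ S ∈ (univ.erase i).powerset, (∏ j ∈ S, -p j) / (#S + 1)) := by
  have hslice : ∀ σ : Perm (Fin k), Measure.pi (fun j => _root_.bernoulliMeasure (p j))
      (Prod.mk σ ⁻¹'
        {w | w.2 i = true ∧ ∀ j : Fin k, w.1.symm j < w.1.symm i → w.2 j = false})
      = ENNReal.ofReal (p i * ∏ j ∈ {j | σ.symm j < σ.symm i}, (1 - p j)) := fun σ => by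
    simpa using
      pi_bernoulliMeasure_firstSuccess hp0 hp1 (B := {j | σ.symm j < σ.symm i}) (by simp)
  have hsum : ∑ σ : Perm (Fin k), ∏ j ∈ {j | σ.symm j < σ.symm i}, (1 - p j)
      = Fintype.card (Perm (Fin k)) *
          ∑ S ∈ (univ.erase i).powerset, (∏ j ∈ S, -p j) / (#S + 1) :=
    (Equiv.sum_comp (Equiv.inv _) _).trans (sum_perm_prod_one_sub p i)
  have hcard : (Fintype.card (Perm (Fin k)) : ℝ≥0∞) ≠ 0 := by simp
  rw [permCoinsMeasure, Measure.prod_apply (Set.to_countable _).measurableSet, lintegral_fintype]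
  simp_rw [hslice, PMF.toMeasure_apply_singleton _ _ (measurableSet_singleton _),
    PMF.uniformOfFintype_apply]
  rw [← sum_mul, ← ENNReal.ofReal_sum_of_nonneg, ← mul_sum, hsum, mul_left_comm,
    ENNReal.ofReal_mul (by positivity), ENNReal.ofReal_natCast, mul_right_comm,
    ENNReal.mul_inv_cancel hcard (ENNReal.natCast_ne_top _), one_mul]
  exact fun σ _ => mul_nonneg (hp0 i) (prod_nonneg fun j _ => sub_nonneg.2 (hp1 j))

lemma pi_setOf_forall_ne_lt_add {ι : Type*} [Fintype ι] [DecidableEq ι] (μ : ι → Measure ℝ)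
    [∀ j, SigmaFinite (μ j)] (i : ι) (c : ι → ℝ) :
    Measure.pi μ {x | ∀ j ≠ i, x j < x i + c j}
      = ∫⁻ t, ∏ j ∈ univ.erase i, μ j (Set.Iio (t + c j)) ∂μ i := by
  let e := MeasurableEquiv.piEquivPiSubtypeProd (fun _ : ι => ℝ) (· = i)
  have he := measurePreserving_piEquivPiSubtypeProd μ (· = i)
  have hS : MeasurableSet {x : ι → ℝ | ∀ j ≠ i, x j < x i + c j} := by
    simp only [Set.ofPred_forall]
    exact .iInter fun j => .iInter fun _ => measurableSet_lt (by fun_prop) (by fun_prop)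
  rw [← he.symm.measure_preimage_equiv, Measure.prod_apply (e.symm.measurable hS)]
  refine Eq.trans ?_ ((measurePreserving_piUnique fun j : {j // j = i} => μ j).lintegral_map_equiv
    (fun t => ∏ j ∈ univ.erase i, μ j (Set.Iio (t + c j))) _).symm
  congr 1
  -- the two `Fintype {j // j = i}` instances underlying `Measure.pi` differ
  · congr; exact Subsingleton.elim _ _
  funext y
  have hslice : Prod.mk y ⁻¹' (e.symm ⁻¹' {x : ι → ℝ | ∀ j ≠ i, x j < x i + c j})
      = Set.univ.pi fun j : {j // ¬j = i} => Set.Iio (y default + c j) := by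
    ext z
    simp only [e, Set.mem_preimage, Set.mem_ofPred_eq, Set.mem_univ_pi, Set.mem_Iio,
      MeasurableEquiv.piEquivPiSubtypeProd_symm_apply, Subtype.forall]
    refine forall₂_congr fun j hj => ?_
    rw [dif_neg hj, dif_pos trivial]
    rfl
  rw [hslice, Measure.pi_pi]
  exact (prod_subtype (univ.erase i) (fun j => by simp)
    fun j => μ j (Set.Iio (y default + c j))).symm

lemma expMeasure_Iio {r : ℝ} (hr : 0 < r) (x : ℝ) :
    expMeasure r (Set.Iio x) = ENNReal.ofReal (1 - exp (-(r * x))) := by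
  rw [expMeasure, gammaMeasure, withDensity_apply _ measurableSet_Iio,
    setLIntegral_congr Iio_ae_eq_Iic, show gammaPDF 1 r = exponentialPDF r from rfl,
    lintegral_exponentialPDF_eq_antiDeriv hr]
  split_ifs with hx
  · rfl
  · rw [ENNReal.ofReal_zero, ENNReal.ofReal_of_nonpos]
    have : 1 ≤ exp (-(r * x)) := one_le_exp (by nlinarith)
    linarith

lemma lintegral_expMeasure (r : ℝ) (f : ℝ → ℝ≥0∞) :
    ∫⁻ x, f x ∂expMeasure r = ∫⁻ x, exponentialPDF r x * f x :=
  lintegral_withDensity_eq_lintegral_mul_non_measurable _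
    (measurable_exponentialPDFReal r).ennreal_ofReal (ae_of_all _ fun _ => ENNReal.ofReal_lt_top) f

lemma lintegral_expMeasure_comp_sub (r : ℝ) {d : ℝ} (hd : 0 ≤ d) {g : ℝ → ℝ≥0∞}
    (hg : ∀ s ∈ Set.Ico (-d) 0, g s = 0) :
    ∫⁻ t, g (t - d) ∂expMeasure r
      = ENNReal.ofReal (exp (-(r * d))) * ∫⁻ s, g s ∂expMeasure r := by
  rw [lintegral_expMeasure, lintegral_expMeasure, ← lintegral_add_right_eq_self _ d,
    ← lintegral_const_mul' _ _ ENNReal.ofReal_ne_top]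
  refine lintegral_congr fun s => ?_
  rw [add_sub_cancel_right]
  rcases lt_or_ge s 0 with hs | hs
  · rcases lt_or_ge s (-d) with hsd | hsd
    · rw [exponentialPDF_of_neg hs, exponentialPDF_of_neg (by linarith)]; simp
    · rw [hg s ⟨hsd, hs⟩]; simp
  · rw [exponentialPDF_of_nonneg hs, exponentialPDF_of_nonneg (by linarith), ← mul_assoc,
      ← ENNReal.ofReal_mul (exp_pos _).le, mul_left_comm, ← exp_add]
    ring_nf

lemma mul_exp_mul_prod_one_sub {ι : Type*} (r x : ℝ) (E : Finset ι) (p : ι → ℝ) :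
    r * exp (-(r * x)) * ∏ j ∈ E, (1 - p j * exp (-(r * x)))
      = ∑ S ∈ E.powerset, (∏ j ∈ S, -p j) * (r * exp (-(r * (#S + 1)) * x)) := by
  simp_rw [sub_eq_add_neg, ← neg_mul, prod_one_add, prod_mul_distrib, prod_const, mul_sum]
  refine sum_congr rfl fun S _ => ?_
  rw [← exp_nat_mul, mul_left_comm, mul_assoc, ← exp_add]
  ring_nf

lemma integral_Ioi_mul_exp_neg_mul {r : ℝ} (hr : 0 < r) (n : ℕ) :
    ∫ x in Set.Ioi 0, r * exp (-(r * (n + 1)) * x) = 1 / (n + 1) := by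
  rw [integral_const_mul, integral_exp_mul_Ioi (by simp; positivity) 0]
  field_simp
  simp

lemma lintegral_expMeasure_prod_one_sub {ι : Type*} {r : ℝ} (hr : 0 < r) (E : Finset ι)
    {p : ι → ℝ} (hp : ∀ j ∈ E, p j ≤ 1) :
    ∫⁻ s, ∏ j ∈ E, ENNReal.ofReal (1 - p j * exp (-(r * s))) ∂expMeasure r
      = ENNReal.ofReal (∑ S ∈ E.powerset, (∏ j ∈ S, -p j) / (#S + 1)) := by
  set f : ℝ → ℝ := fun s => r * exp (-(r * s)) * ∏ j ∈ E, (1 - p j * exp (-(r * s)))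
  have hfactor : ∀ s, 0 ≤ s → ∀ j ∈ E, 0 ≤ 1 - p j * exp (-(r * s)) := fun s hs j hj =>
    sub_nonneg.2 <| mul_le_one₀ (hp j hj) (exp_pos _).le (exp_le_one_iff.2 (by nlinarith))
  have hpoint : ∀ s, exponentialPDF r s * ∏ j ∈ E, ENNReal.ofReal (1 - p j * exp (-(r * s)))
      = ENNReal.ofReal ((Set.Ici 0).indicator f s) := by
    intro s
    rcases lt_or_ge s 0 with hs | hs
    · simp [exponentialPDF_of_neg hs, hs]
    · rw [exponentialPDF_of_nonneg hs, Set.indicator_of_mem (Set.mem_Ici.2 hs),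
        ← ENNReal.ofReal_prod_of_nonneg (hfactor s hs), ← ENNReal.ofReal_mul (by positivity)]
  have hterm : ∀ n : ℕ, IntegrableOn (fun x => r * exp (-(r * (n + 1)) * x)) (Set.Ioi 0) :=
    fun n => (integrableOn_exp_mul_Ioi (by simp; positivity) 0).const_mul r
  have hf : IntegrableOn f (Set.Ioi 0) := by
    simp_rw [f, mul_exp_mul_prod_one_sub]
    exact integrable_finsetSum _ fun S _ => (hterm _).const_mul _
  rw [lintegral_expMeasure, lintegral_congr hpoint, ← ofReal_integral_eq_lintegral_ofReal,
    integral_indicator measurableSet_Ici, integral_Ici_eq_integral_Ioi]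
  · simp_rw [f, mul_exp_mul_prod_one_sub]
    rw [integral_finsetSum _ fun S _ => (hterm _).const_mul _]
    refine congrArg _ (sum_congr rfl fun S _ => ?_)
    rw [MeasureTheory.integral_const_mul, integral_Ioi_mul_exp_neg_mul hr, mul_one_div]
  · exact (integrable_indicator_iff measurableSet_Ici).2
      ((integrableOn_Ici_iff_integrableOn_Ioi).2 hf)
  · exact ae_of_all _ fun s => Set.indicator_nonneg (fun s hs =>
      mul_nonneg (by positivity) (prod_nonneg (hfactor s hs))) s

lemma exp_mul_sub_le_one {r a b : ℝ} (hr : 0 ≤ r) (hab : a ≤ b) : exp (r * (a - b)) ≤ 1 :=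
  exp_le_one_iff.2 (mul_nonpos_of_nonneg_of_nonpos hr (sub_nonpos.2 hab))

theorem pi_expMeasure_argmax {ι : Type*} [Fintype ι] [DecidableEq ι] (q : ι → ℝ) {lam : ℝ}
    (hlam : 0 < lam) {qstar : ℝ} (hq : IsGreatest (Set.range q) qstar) (i : ι) :
    Measure.pi (fun _ : ι => expMeasure lam) {x | ∀ j, j ≠ i → q j + x j < q i + x i}
      = ENNReal.ofReal (exp (lam * (q i - qstar)) * ∑ S ∈ (univ.erase i).powerset,
          (∏ j ∈ S, -exp (lam * (q j - qstar))) / (#S + 1)) := by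
  have := isProbabilityMeasure_expMeasure hlam
  set p : ι → ℝ := fun j => exp (lam * (q j - qstar))
  have hd : 0 ≤ qstar - q i := sub_nonneg.2 (hq.2 (Set.mem_range_self i))
  let G : ℝ → ℝ≥0∞ := fun s =>
    ∏ j ∈ univ.erase i, ENNReal.ofReal (1 - p j * exp (-(lam * s)))
  have hset : {x : ι → ℝ | ∀ j, j ≠ i → q j + x j < q i + x i}
      = {x | ∀ j ≠ i, x j < x i + (q i - q j)} := by
    ext x
    exact forall₂_congr fun j _ => by constructor <;> intro h <;> linarith
  have hshift : ∀ t, ∏ j ∈ univ.erase i, expMeasure lam (Set.Iio (t + (q i - q j)))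
      = G (t - (qstar - q i)) := fun t => prod_congr rfl fun j _ => by
    rw [expMeasure_Iio hlam, ← exp_add]
    ring_nf
  have hvanish : ∀ s ∈ Set.Ico (-(qstar - q i)) 0, G s = 0 := by
    rintro s ⟨hs₁, hs₀⟩
    obtain ⟨j₀, hj₀⟩ := hq.1
    have hj₀i : j₀ ≠ i := by rintro rfl; linarith
    refine prod_eq_zero (mem_erase.2 ⟨hj₀i, mem_univ _⟩) (ENNReal.ofReal_of_nonpos ?_)
    simp only [p, hj₀, sub_self, mul_zero, exp_zero, one_mul, sub_nonpos]
    exact one_le_exp (by nlinarith)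
  rw [hset, pi_setOf_forall_ne_lt_add, lintegral_congr hshift,
    lintegral_expMeasure_comp_sub lam hd hvanish,
    lintegral_expMeasure_prod_one_sub hlam _ fun j _ =>
      exp_mul_sub_le_one hlam.le (hq.2 ⟨j, rfl⟩),
    ← ENNReal.ofReal_mul (exp_pos _).le]
  ring_nf

/-- **Permute-and-flip = report noisy max with exponential noise.**
For every outcome `i : Fin k`, the probability that permute-and-flip (with scores `q`, rate `lam`)
outputs `i` (i.e. that the coin of `i` lands heads and all coins of indices preceding `i` in the
random order land tails) equals the probability that `i` is the (a.s. unique) maximizer of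
`q j + X j` where the `X j` are i.i.d. `Expo(lam)`. -/
theorem permuteAndFlip_eq_reportNoisyMax
    (k : ℕ) (q : Fin k → ℝ) (lam : ℝ) (hlam : 0 < lam)
    (qstar : ℝ) (hqstar : IsGreatest (Set.range q) qstar) :
    ∀ i : Fin k,
      permCoinsMeasure k (fun j => exp (lam * (q j - qstar)))
        {w | w.2 i = true ∧ ∀ j : Fin k, w.1.symm j < w.1.symm i → w.2 j = false}
      = Measure.pi (fun _ : Fin k => expMeasure lam)
        {x | ∀ j : Fin k, j ≠ i → q j + x j < q i + x i} := by
  intro i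
  rw [permCoinsMeasure_firstSuccess (fun j => (exp_pos _).le)
      (fun j => exp_mul_sub_le_one hlam.le (hqstar.2 ⟨j, rfl⟩)),
    pi_expMeasure_argmax q hlam hqstar]
end

section
/- The Algorithm-A distribution with scores q and rate λ is equal, as a probability distribution on Fin k, to the Algorithm-B distribution with the same scores q and rate λ. -/
open MeasureTheory ProbabilityTheory Real
open scoped ENNReal

/-!
Conditionally on the noise `X`, Algorithm B outputs `i ∈ S` exactly when `Z i` is the strict
maximum of `Z` over `S`. The `Z j` are i.i.d. with an atomless law, so ties have probability zero
and swapping two coordinates preserves the law. Hence the `|S|` disjoint events "`Z j` is the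
strict maximum over `S`", `j ∈ S`, have equal probabilities summing to one, so each has
probability `1/|S|`, which is the probability that Algorithm A outputs `i` given `X`.
-/

section StrictArgmax

variable {ι : Type*}

def strictArgmaxSet (T : Finset ι) (i : ι) : Set (ι → ℝ) :=
  {z | ∀ j ∈ T, j ≠ i → z j < z i}

theorem measurableSet_strictArgmaxSet [Countable ι] (T : Finset ι) (i : ι) :
    MeasurableSet (strictArgmaxSet T i) :=
  measurableSet_setOfPred.2 (by fun_prop)

theorem preimage_piCongrLeft_strictArgmaxSet {T : Finset ι} (σ : Equiv.Perm ι)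
    (hσ : ∀ l, σ l ∈ T ↔ l ∈ T) (i : ι) :
    MeasurableEquiv.piCongrLeft (fun _ => ℝ) σ ⁻¹' strictArgmaxSet T (σ i)
      = strictArgmaxSet T i := by
  ext z
  simp only [strictArgmaxSet, Set.mem_preimage, Set.mem_ofPred]
  rw [← σ.forall_congr_right]
  simp only [MeasurableEquiv.piCongrLeft_apply_apply, hσ, σ.injective.ne_iff]

theorem pairwiseDisjoint_strictArgmaxSet (T : Finset ι) :
    (T : Set ι).PairwiseDisjoint (strictArgmaxSet T) :=
  fun i hi j hj hij => Set.disjoint_left.2 fun _ hzi hzj =>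
    (hzi j hj hij.symm).asymm (hzj i hi hij)

variable [Fintype ι] {μ : Measure ℝ} [IsProbabilityMeasure μ]

theorem measure_pi_strictArgmaxSet_eq [DecidableEq ι] {T : Finset ι} {i j : ι} (hi : i ∈ T)
    (hj : j ∈ T) :
    Measure.pi (fun _ : ι => μ) (strictArgmaxSet T i)
      = Measure.pi (fun _ : ι => μ) (strictArgmaxSet T j) := by
  have hσ : ∀ l, Equiv.swap i j l ∈ T ↔ l ∈ T := fun l => by
    rcases eq_or_ne l i with rfl | hli
    · simp [hi, hj]
    rcases eq_or_ne l j with rfl | hlj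
    · simp [hi, hj]
    rw [Equiv.swap_apply_of_ne_of_ne hli hlj]
  have hpre := preimage_piCongrLeft_strictArgmaxSet (Equiv.swap i j) hσ i
  rw [Equiv.swap_apply_left] at hpre
  rw [← hpre, (measurePreserving_piCongrLeft (fun _ => μ) _).measure_preimage
    (measurableSet_strictArgmaxSet T j).nullMeasurableSet]

theorem measure_pi_setOf_eval_eq_eval [NullSingletonClass μ] {i j : ι} (hij : i ≠ j) :
    Measure.pi (fun _ : ι => μ) {z | z i = z j} = 0 := by
  set P := Measure.pi (fun _ : ι => μ)
  have hindep : IndepFun (fun z : ι → ℝ => z i) (fun z => z j) P :=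
    (iIndepFun_pi (X := fun _ => id) fun _ => aemeasurable_id).indepFun hij
  have hmap : P.map (fun z => (z i, z j)) = μ.prod μ := by
    rw [hindep.map_prod_eq_prod_map_map (measurable_pi_apply i).aemeasurable
      (measurable_pi_apply j).aemeasurable,
      (measurePreserving_eval _ i).map_eq, (measurePreserving_eval _ j).map_eq]
  have hdiag : (μ.prod μ) (Set.diagonal ℝ) = 0 := by
    rw [Measure.prod_apply measurableSet_diagonal]
    simp [Set.preimage, Set.diagonal]
  change P ((fun z => (z i, z j)) ⁻¹' Set.diagonal ℝ) = 0
  rwa [← Measure.map_apply (by fun_prop) measurableSet_diagonal, hmap]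

theorem measure_pi_iUnion_strictArgmaxSet [NullSingletonClass μ] {T : Finset ι}
    (hT : T.Nonempty) :
    Measure.pi (fun _ : ι => μ) (⋃ i ∈ T, strictArgmaxSet T i) = 1 := by
  rw [← prob_compl_eq_zero_iff
    (Finset.measurableSet_biUnion T fun i _ => measurableSet_strictArgmaxSet T i)]
  refine measure_mono_null (t := ⋃ (i) (j) (_ : i ≠ j), {z | z i = z j}) (fun z hz => ?_)
    (measure_iUnion_null fun i => measure_iUnion_null fun j =>
      measure_iUnion_null fun hij => measure_pi_setOf_eval_eq_eval hij)
  obtain ⟨i, hi, hmax⟩ := T.exists_max_image z hT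
  have hnot : z ∉ strictArgmaxSet T i := fun h => hz (Set.mem_biUnion hi h)
  simp only [strictArgmaxSet, Set.mem_ofPred, not_forall, not_lt] at hnot
  obtain ⟨j, hj, hji, hle⟩ := hnot
  simp only [Set.mem_iUnion]
  exact ⟨j, i, hji, (hmax j hj).antisymm hle⟩

theorem measure_pi_strictArgmaxSet [DecidableEq ι] [NullSingletonClass μ] {T : Finset ι} {i : ι}
    (hi : i ∈ T) :
    Measure.pi (fun _ : ι => μ) (strictArgmaxSet T i) = (T.card : ℝ≥0∞)⁻¹ := by
  have hsum := measure_biUnion_finset (μ := Measure.pi fun _ : ι => μ)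
    (pairwiseDisjoint_strictArgmaxSet T) fun j _ => measurableSet_strictArgmaxSet T j
  rw [measure_pi_iUnion_strictArgmaxSet ⟨i, hi⟩,
    Finset.sum_congr rfl fun j hj => measure_pi_strictArgmaxSet_eq hj hi, Finset.sum_const,
    nsmul_eq_mul] at hsum
  exact ENNReal.eq_inv_of_mul_eq_one_left (by rw [mul_comm, ← hsum])

end StrictArgmax

instance nullSingletonClass_expMeasure (r : ℝ) : NullSingletonClass (expMeasure r) :=
  nullSingletonClass_withDensity _

theorem algorithmA_eq_algorithmB_general
    (k : ℕ) (q : Fin k → ℝ) (lam : ℝ) (hlam : 0 < lam)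
    (qstar : ℝ) :
    ∀ i : Fin k,
      (∫⁻ x, (if qstar ≤ q i + x i then
            (((Finset.univ.filter (fun j : Fin k => qstar ≤ q j + x j)).card : ℝ≥0∞))⁻¹ else 0)
          ∂(Measure.pi fun _ : Fin k => expMeasure lam))
      = ((Measure.pi fun _ : Fin k => expMeasure lam).prod
            (Measure.pi fun _ : Fin k => expMeasure lam))
          {w | qstar ≤ q i + w.1 i ∧
            ∀ j : Fin k, j ≠ i → qstar ≤ q j + w.1 j → w.2 j < w.2 i} := by
  intro i
  have := isProbabilityMeasure_expMeasure hlam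
  rw [Measure.prod_apply (by measurability)]
  refine lintegral_congr fun x => ?_
  split_ifs with hi
  · rw [← measure_pi_strictArgmaxSet (μ := expMeasure lam)
      (Finset.mem_filter.2 ⟨Finset.mem_univ i, hi⟩)]
    congr 1
    ext z
    simp only [strictArgmaxSet, Set.mem_preimage, Set.mem_ofPred, Finset.mem_filter,
      Finset.mem_univ, true_and, hi]
    exact forall_congr' fun _ => imp.swap
  · simp [hi]

/-- **Algorithm A = Algorithm B.**
For every outcome `i : Fin k`, the probability that Algorithm A (with scores `q`, rate `lam`)
outputs `i` — the expected value, over i.i.d. `X j ~ Expo(lam)`, of the probability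
`1/|S|·1[i ∈ S]` that a uniformly random element of `S = {j | q j + X j ≥ q*}` equals `i` —
equals the probability that Algorithm B outputs `i`, i.e. that (for i.i.d. `X j ~ Expo(lam)` and,
independently, i.i.d. `Z j ~ Expo(lam)`) `i` belongs to `S' = {j | q j + X j ≥ q*}` and `Z i` is
the (a.s. unique) maximum of `Z` over `S'`. -/
theorem algorithmA_eq_algorithmB
    (k : ℕ) (q : Fin k → ℝ) (lam : ℝ) (hlam : 0 < lam)
    (qstar : ℝ) (hqstar : IsGreatest (Set.range q) qstar) :
    ∀ i : Fin k,
      (∫⁻ x, (if qstar ≤ q i + x i then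
            (((Finset.univ.filter (fun j : Fin k => qstar ≤ q j + x j)).card : ℝ≥0∞))⁻¹ else 0)
          ∂(Measure.pi fun _ : Fin k => expMeasure lam))
      = ((Measure.pi fun _ : Fin k => expMeasure lam).prod
            (Measure.pi fun _ : Fin k => expMeasure lam))
          {w | qstar ≤ q i + w.1 i ∧
            ∀ j : Fin k, j ≠ i → qstar ≤ q j + w.1 j → w.2 j < w.2 i} :=
  algorithmA_eq_algorithmB_general k q lam hlam qstar
end

section
/- The Algorithm-B distribution with scores q and rate λ is equal, as a probability distribution on Fin k, to the report-noisy-max-with-exponential-noise distribution with the same scores q and rate λ. -/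
open MeasureTheory ProbabilityTheory Real
open scoped ENNReal

/-! If `X, Z ~ Expo(r)` are independent and `a ≥ 0`, then by memorylessness the variable equal to
`a + Z` when `X ≥ a` and to `X` otherwise is again `Expo(r)`. Applying this coordinatewise with
`a j = q* - q j` turns the pair `(X, Z)` of Algorithm B into noise `Y` for which `q + Y` has the
same argmax as Algorithm B's output: the indices in `S'` get score `q* + Z j`, the others stay
below `q*`. -/

open Set

namespace ProbabilityTheory

variable {r : ℝ}

lemma expMeasure_Iio_of_nonneg (hr : 0 < r) {a : ℝ} (ha : 0 ≤ a) :
    expMeasure r (Iio a) = ENNReal.ofReal (1 - rexp (-(r * a))) := by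
  have hIio : Iio a =ᵐ[expMeasure r] Iic a :=
    Iio_ae_eq_Iic' (withDensity_absolutelyContinuous _ _ (measure_singleton a))
  rw [measure_congr hIio, expMeasure, gammaMeasure, withDensity_apply _ measurableSet_Iic]
  exact (lintegral_exponentialPDF_eq_antiDeriv hr a).trans (by rw [if_pos ha])

lemma ae_nonneg_expMeasure (hr : 0 < r) : ∀ᵐ x ∂expMeasure r, 0 ≤ x := by
  simpa [ae_iff, ← Iio_def] using expMeasure_Iio_of_nonneg hr le_rfl

lemma expMeasure_Ici (hr : 0 < r) {a : ℝ} (ha : 0 ≤ a) :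
    expMeasure r (Ici a) = ENNReal.ofReal (rexp (-(r * a))) := by
  have := isProbabilityMeasure_expMeasure hr
  have hexp : rexp (-(r * a)) ≤ 1 := exp_le_one_iff.2 (by nlinarith)
  rw [← compl_Iio, prob_compl_eq_one_sub measurableSet_Iio, expMeasure_Iio_of_nonneg hr ha,
    ← ENNReal.ofReal_one, ← ENNReal.ofReal_sub _ (by linarith), sub_sub_cancel]

lemma expMeasure_Ici_add (hr : 0 < r) {a b : ℝ} (ha : 0 ≤ a) (hb : 0 ≤ b) :
    expMeasure r (Ici (a + b)) = expMeasure r (Ici a) * expMeasure r (Ici b) := by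
  rw [expMeasure_Ici hr (add_nonneg ha hb), expMeasure_Ici hr ha, expMeasure_Ici hr hb,
    ← ENNReal.ofReal_mul (exp_nonneg _), ← Real.exp_add, mul_add, neg_add]

lemma ae_nonneg_pi_expMeasure {ι : Type*} [Fintype ι] (hr : 0 < r) :
    ∀ᵐ x ∂Measure.pi (fun _ : ι => expMeasure r), ∀ j, 0 ≤ x j := by
  have := isProbabilityMeasure_expMeasure hr
  exact ae_all_iff.2 fun j =>
    (measurePreserving_eval _ j).quasiMeasurePreserving.ae (ae_nonneg_expMeasure hr)

end ProbabilityTheory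

noncomputable def resampleAbove (a : ℝ) (p : ℝ × ℝ) : ℝ := if a ≤ p.1 then a + p.2 else p.1

lemma measurable_resampleAbove (a : ℝ) : Measurable (resampleAbove a) :=
  Measurable.ite (measurableSet_le measurable_const measurable_fst)
    (measurable_const.add measurable_snd) measurable_fst

lemma resampleAbove_preimage_Ici_of_lt {a t : ℝ} (hat : a < t) :
    resampleAbove a ⁻¹' Ici t = Ici a ×ˢ Ici (t - a) := by
  ext ⟨x, z⟩
  simp only [resampleAbove, mem_preimage, mem_Ici, mem_prod]
  split_ifs with hx
  · simp [hx, add_comm]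
  · simp only [hx, false_and, iff_false, not_le]
    linarith

lemma resampleAbove_preimage_Ici_ae_eq_of_le {μ ν : Measure ℝ} [SFinite ν]
    (hν : ∀ᵐ z ∂ν, 0 ≤ z) {a t : ℝ} (hta : t ≤ a) :
    resampleAbove a ⁻¹' Ici t =ᵐ[μ.prod ν] Ici t ×ˢ univ := by
  filter_upwards [Measure.quasiMeasurePreserving_snd.ae hν] with ⟨x, z⟩ hz
  change (t ≤ resampleAbove a (x, z)) = (t ≤ x ∧ True)
  rw [resampleAbove, and_true, eq_iff_iff]
  split_ifs with hx <;> constructor <;> intro <;> linarith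

lemma measurePreserving_resampleAbove {r a : ℝ} (hr : 0 < r) (ha : 0 ≤ a) :
    MeasurePreserving (resampleAbove a) ((expMeasure r).prod (expMeasure r)) (expMeasure r) := by
  have := isProbabilityMeasure_expMeasure hr
  refine ⟨measurable_resampleAbove a, Measure.ext_of_Ici _ _ fun t => ?_⟩
  rw [Measure.map_apply (measurable_resampleAbove a) measurableSet_Ici]
  rcases lt_or_ge a t with hat | hta
  · rw [resampleAbove_preimage_Ici_of_lt hat, Measure.prod_prod,
      ← expMeasure_Ici_add hr ha (by linarith), add_sub_cancel]
  · rw [measure_congr (resampleAbove_preimage_Ici_ae_eq_of_le (ae_nonneg_expMeasure hr) hta),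
      Measure.prod_prod, measure_univ, mul_one]

lemma measurePreserving_pi_resampleAbove {ι : Type*} [Fintype ι] {r : ℝ} (hr : 0 < r)
    {a : ι → ℝ} (ha : ∀ j, 0 ≤ a j) :
    MeasurePreserving (fun w : (ι → ℝ) × (ι → ℝ) => fun j => resampleAbove (a j) (w.1 j, w.2 j))
      ((Measure.pi fun _ => expMeasure r).prod (Measure.pi fun _ => expMeasure r))
      (Measure.pi fun _ => expMeasure r) := by
  have := isProbabilityMeasure_expMeasure hr
  exact (measurePreserving_pi _ _ fun j => measurePreserving_resampleAbove hr (ha j)).comp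
    (measurePreserving_arrowProdEquivProdArrow ℝ ℝ ι _ _).symm

lemma add_resampleAbove_sub (c s x z : ℝ) :
    c + resampleAbove (s - c) (x, z) = if s ≤ c + x then s + z else c + x := by
  by_cases h : s ≤ c + x
  · rw [if_pos h, resampleAbove, if_pos (by linarith)]; ring
  · rw [if_neg h, resampleAbove, if_neg (by linarith)]

lemma algorithmB_output_iff_argmax_resampleAbove {ι : Type*} {q : ι → ℝ} {qstar : ℝ}
    (hq : IsGreatest (range q) qstar) {x z : ι → ℝ} (hx : ∀ j, 0 ≤ x j) (hz : ∀ j, 0 ≤ z j)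
    (i : ι) :
    (qstar ≤ q i + x i ∧ ∀ j, j ≠ i → qstar ≤ q j + x j → z j < z i) ↔
      ∀ j, j ≠ i → q j + resampleAbove (qstar - q j) (x j, z j)
        < q i + resampleAbove (qstar - q i) (x i, z i) := by
  simp only [add_resampleAbove_sub]
  constructor
  · rintro ⟨hi, hmax⟩ j hji
    rw [if_pos hi]
    split_ifs with hj
    · linarith [hmax j hji hj]
    · linarith [hz i]
  · intro h
    obtain ⟨⟨j₀, hj₀⟩, -⟩ := hq
    have hi : qstar ≤ q i + x i := by
      by_contra hi
      have hj₀i : j₀ ≠ i := by rintro rfl; linarith [hx j₀]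
      have := h j₀ hj₀i
      rw [if_neg hi, if_pos (by linarith [hx j₀])] at this
      linarith [hz j₀]
    refine ⟨hi, fun j hji hj => ?_⟩
    have := h j hji
    rw [if_pos hi, if_pos hj] at this
    linarith

/-- **Algorithm B = report noisy max with exponential noise.**
For every outcome `i : Fin k`, the probability that Algorithm B (with scores `q`, rate `lam`)
outputs `i` — i.e. that (for i.i.d. `X j ~ Expo(lam)` and, independently, i.i.d.
`Z j ~ Expo(lam)`) `i` belongs to `S' = {j | q j + X j ≥ q*}` and `Z i` is the (a.s. unique)
maximum of `Z` over `S'` — equals the probability that `i` is the (a.s. unique) maximizer of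
`q j + X j` for i.i.d. `X j ~ Expo(lam)`. -/
theorem algorithmB_eq_reportNoisyMax
    (k : ℕ) (q : Fin k → ℝ) (lam : ℝ) (hlam : 0 < lam)
    (qstar : ℝ) (hqstar : IsGreatest (Set.range q) qstar) :
    ∀ i : Fin k,
      ((Measure.pi fun _ : Fin k => expMeasure lam).prod
          (Measure.pi fun _ : Fin k => expMeasure lam))
        {w | qstar ≤ q i + w.1 i ∧
          ∀ j : Fin k, j ≠ i → qstar ≤ q j + w.1 j → w.2 j < w.2 i}
      = (Measure.pi fun _ : Fin k => expMeasure lam)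
          {x | ∀ j : Fin k, j ≠ i → q j + x j < q i + x i} := by
  intro i
  set μ := Measure.pi fun _ : Fin k => expMeasure lam
  have hF := measurePreserving_pi_resampleAbove hlam
    (a := fun j => qstar - q j) fun j => sub_nonneg.2 (hqstar.2 ⟨j, rfl⟩)
  have hevent : {w : (Fin k → ℝ) × (Fin k → ℝ) | qstar ≤ q i + w.1 i ∧
        ∀ j : Fin k, j ≠ i → qstar ≤ q j + w.1 j → w.2 j < w.2 i}
      =ᵐ[μ.prod μ] (fun w j => resampleAbove (qstar - q j) (w.1 j, w.2 j)) ⁻¹'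
        {x : Fin k → ℝ | ∀ j : Fin k, j ≠ i → q j + x j < q i + x i} := by
    filter_upwards [Measure.quasiMeasurePreserving_fst.ae (ae_nonneg_pi_expMeasure hlam),
      Measure.quasiMeasurePreserving_snd.ae (ae_nonneg_pi_expMeasure hlam)] with w hx hz
    exact propext (algorithmB_output_iff_argmax_resampleAbove hqstar hx hz i)
  have hmeas : MeasurableSet {x : Fin k → ℝ | ∀ j : Fin k, j ≠ i → q j + x j < q i + x i} := by
    measurability
  rw [measure_congr hevent, hF.measure_preimage hmeas.nullMeasurableSet]
end
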